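/- Let ⦀·⦀ be an orthant-monotonic norm on ℝ^d such that the normed space (ℝ^d, ⦀·⦀⋆) is strictly convex. Then for every k ∈ {0,1,…,d}, the intersection of the level set {x ∈ ℝ^d : ℓ0(x) ≤ k} of the ℓ0 pseudonorm with the dual unit sphere S⋆ = {y : ⦀y⦀⋆ = 1} equals the intersection of the unit ball of the generalized k-support norm with S⋆ (for k = 0 the unit ball of the generalized 0-support norm is understood as {0}, so both sides are empty). -/

import Mathlib

open Finset Set

namespace OSMPaper

variable {d : ℕ}

/-- Standard inner product on `ℝ^d = Fin d → ℝ`. -/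
def dot (x y : Fin d → ℝ) : ℝ := ∑ i, x i * y i

/-- `N` is a norm on `ℝ^d`. -/
def IsNorm (N : (Fin d → ℝ) → ℝ) : Prop :=
  (∀ x, 0 ≤ N x) ∧ (∀ x, N x = 0 ↔ x = 0) ∧
  (∀ (c : ℝ) (x : Fin d → ℝ), N (c • x) = |c| * N x) ∧
  (∀ x y, N (x + y) ≤ N x + N y)

/-- `proj K x = x_K`, the vector coinciding with `x` on `K` and zero outside `K`. -/
def proj (K : Finset (Fin d)) (x : Fin d → ℝ) : Fin d → ℝ :=
  fun i => if i ∈ K then x i else 0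

/-- The coordinate subspace `ℝ_K`. -/
def coordSubspace (K : Finset (Fin d)) : Set (Fin d → ℝ) :=
  {x | ∀ j, j ∉ K → x j = 0}

/-- Orthant-monotonic norm. -/
def OrthantMonotonic (N : (Fin d → ℝ) → ℝ) : Prop :=
  ∀ x x' : Fin d → ℝ, (∀ i, |x i| ≤ |x' i|) → (∀ i, 0 ≤ x i * x' i) → N x ≤ N x'

/-- Orthant-strictly monotonic norm. -/
def OrthantStrictlyMonotonic (N : (Fin d → ℝ) → ℝ) : Prop :=
  ∀ x x' : Fin d → ℝ, (∀ i, |x i| ≤ |x' i|) → (∃ j, |x j| < |x' j|) →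
    (∀ i, 0 ≤ x i * x' i) → N x < N x'

/-- Dual norm `⦀y⦀⋆ = sup_{N x ≤ 1} ⟨x, y⟩`. -/
noncomputable def dualNorm (N : (Fin d → ℝ) → ℝ) (y : Fin d → ℝ) : ℝ :=
  sSup {r | ∃ x, N x ≤ 1 ∧ r = dot x y}

/-- Support function of a set `S`. -/
noncomputable def suppFn (S : Set (Fin d → ℝ)) (y : Fin d → ℝ) : ℝ :=
  sSup {r | ∃ x ∈ S, r = dot x y}

/-- Generalized top-`k` norm associated with the source norm `N`. -/
noncomputable def topNorm (N : (Fin d → ℝ) → ℝ) (k : ℕ) (x : Fin d → ℝ) : ℝ :=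
  sSup {r | ∃ K : Finset (Fin d), K.card ≤ k ∧ r = N (proj K x)}

/-- Generalized `k`-support norm: the dual norm of the generalized top-`k` norm. -/
noncomputable def supportNorm (N : (Fin d → ℝ) → ℝ) (k : ℕ) : (Fin d → ℝ) → ℝ :=
  dualNorm (topNorm N k)

/-- The ℓ0 pseudonorm: the number of nonzero components. -/
noncomputable def l0 (x : Fin d → ℝ) : ℕ := Set.ncard {i | x i ≠ 0}

/-- `x` is an extreme point of the convex set `C`. -/
def ExtremePt (C : Set (Fin d → ℝ)) (x : Fin d → ℝ) : Prop :=
  x ∈ C ∧ ∀ y ∈ C, ∀ z ∈ C, ∀ t : ℝ, 0 < t → t < 1 →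
    x = t • y + (1 - t) • z → y = x ∧ z = x

/-! If `l0 y ≤ k`, with support `K`, then `⟨x, y⟩ = ⟨x_K, y⟩ ≤ ⦀x_K⦀ ⦀y⦀⋆ ≤ ⦀x⦀^top_k ⦀y⦀⋆`, so the
`k`-sparse part of the dual unit ball lies in the unit ball of the `k`-support norm.
Conversely, since `⦀x_K⦀` is the support function of `B⋆ ∩ ℝ_K` (biduality on a coordinate
subspace), separating a point of the `k`-support unit ball from the compact convex hull of
`B⋆ ∩ {l0 ≤ k}` is impossible, so the ball lies in that hull. A point of the dual sphere is
extreme in `B⋆` by strict convexity, hence extreme in the hull, hence one of its `k`-sparse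
generators. -/

open Matrix
open scoped Pointwise

lemma dot_eq_dotProduct (x y : Fin d → ℝ) : dot x y = x ⬝ᵥ y := rfl

lemma dot_comm (x y : Fin d → ℝ) : dot x y = dot y x := dotProduct_comm x y

lemma dot_proj_right (K : Finset (Fin d)) (x y : Fin d → ℝ) :
    dot x (proj K y) = dot (proj K x) y :=
  Finset.sum_congr rfl fun i _ => by by_cases hi : i ∈ K <;> simp [proj, hi]

lemma proj_mem_coordSubspace (K : Finset (Fin d)) (x : Fin d → ℝ) :
    proj K x ∈ coordSubspace K :=
  fun _ hj => if_neg hj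

lemma proj_eq_self {K : Finset (Fin d)} {x : Fin d → ℝ} (hx : x ∈ coordSubspace K) :
    proj K x = x := by
  ext i; by_cases hi : i ∈ K <;> simp [proj, hi, hx i]

lemma proj_singleton (i : Fin d) (x : Fin d → ℝ) : proj {i} x = x i • Pi.single i 1 := by
  ext j
  rcases eq_or_ne j i with rfl | h
  · simp [proj]
  · simp [proj, h]

lemma proj_smul (K : Finset (Fin d)) (c : ℝ) (x : Fin d → ℝ) : proj K (c • x) = c • proj K x := by
  ext i; by_cases hi : i ∈ K <;> simp [proj, hi]

lemma proj_add (K : Finset (Fin d)) (x y : Fin d → ℝ) : proj K (x + y) = proj K x + proj K y := by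
  ext i; by_cases hi : i ∈ K <;> simp [proj, hi]

lemma isClosed_coordSubspace (K : Finset (Fin d)) : IsClosed (coordSubspace K) := by
  simp only [coordSubspace, Set.ofPred_forall]
  exact isClosed_iInter fun j => isClosed_iInter fun _ =>
    isClosed_eq (continuous_apply j) continuous_const

lemma convex_coordSubspace (K : Finset (Fin d)) : Convex ℝ (coordSubspace K) :=
  fun a ha b hb _ _ _ _ _ j hj => by simp [ha j hj, hb j hj]

lemma exists_dot_eq (f : StrongDual ℝ (Fin d → ℝ)) : ∃ w, ∀ x, f x = dot x w :=
  ⟨fun i => f fun j => if i = j then 1 else 0, fun x => by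
    simpa [dot] using f.toLinearMap.pi_apply_eq_sum_univ x⟩

lemma exists_dot_le_one_lt_dot {s : Set (Fin d → ℝ)} (hconv : Convex ℝ s) (hclosed : IsClosed s)
    (h0 : 0 ∈ s) {y : Fin d → ℝ} (hy : y ∉ s) :
    ∃ w, (∀ a ∈ s, dot a w ≤ 1) ∧ 1 < dot y w := by
  obtain ⟨f, u, hfs, hfy⟩ := geometric_hahn_banach_closed_point hconv hclosed hy
  obtain ⟨w, hw⟩ := exists_dot_eq f
  have hu : 0 < u := by simpa using hfs 0 h0
  have hscaled : ∀ x, dot x (u⁻¹ • w) = u⁻¹ * f x := fun x => by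
    rw [hw, dot_eq_dotProduct, dot_eq_dotProduct, dotProduct_smul, smul_eq_mul]
  refine ⟨u⁻¹ • w, fun a ha => ?_, ?_⟩
  · rw [hscaled, inv_mul_le_one₀ hu]
    exact (hfs a ha).le
  · rw [hscaled, one_lt_inv_mul₀ hu]
    exact hfy

section Norm

variable {N : (Fin d → ℝ) → ℝ}

lemma IsNorm.map_zero (hN : IsNorm N) : N 0 = 0 := (hN.2.1 0).2 rfl

lemma IsNorm.pos (hN : IsNorm N) {x : Fin d → ℝ} (hx : x ≠ 0) : 0 < N x :=
  (hN.1 x).lt_of_ne fun h => hx ((hN.2.1 x).1 h.symm)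

lemma IsNorm.map_neg (hN : IsNorm N) (x : Fin d → ℝ) : N (-x) = N x := by
  simpa using hN.2.2.1 (-1) x

lemma IsNorm.convexOn (hN : IsNorm N) : ConvexOn ℝ univ N :=
  ⟨convex_univ, fun x _ y _ a b ha hb _ => by
    calc N (a • x + b • y) ≤ N (a • x) + N (b • y) := hN.2.2.2 _ _
      _ = a • N x + b • N y := by
        rw [hN.2.2.1, hN.2.2.1, abs_of_nonneg ha, abs_of_nonneg hb, smul_eq_mul, smul_eq_mul]⟩

lemma IsNorm.continuous (hN : IsNorm N) : Continuous N :=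
  continuousOn_univ.1 (hN.convexOn.continuousOn isOpen_univ)

lemma IsNorm.convex_ball (hN : IsNorm N) : Convex ℝ {x | N x ≤ 1} := by
  simpa using hN.convexOn.convex_le 1

lemma IsNorm.isClosed_ball (hN : IsNorm N) : IsClosed {x | N x ≤ 1} :=
  isClosed_le hN.continuous continuous_const

lemma OrthantMonotonic.apply_proj_le (hom : OrthantMonotonic N) (K : Finset (Fin d))
    (x : Fin d → ℝ) : N (proj K x) ≤ N x :=
  hom _ _ (fun i => by by_cases h : i ∈ K <;> simp [proj, h])
    (fun i => by by_cases h : i ∈ K <;> simp [proj, h, mul_self_nonneg])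

lemma abs_mul_apply_single_le (hN : IsNorm N) (hom : OrthantMonotonic N) (x : Fin d → ℝ)
    (i : Fin d) : |x i| * N (Pi.single i 1) ≤ N x := by
  simpa only [proj_singleton, hN.2.2.1] using hom.apply_proj_le {i} x

end Norm

section Dual

variable {N : (Fin d → ℝ) → ℝ}

lemma bddAbove_dualNorm_set (hN : IsNorm N) (hom : OrthantMonotonic N) (y : Fin d → ℝ) :
    BddAbove {r | ∃ x, N x ≤ 1 ∧ r = dot x y} := by
  refine ⟨∑ i, |y i| / N (Pi.single i 1), ?_⟩
  rintro r ⟨x, hx, rfl⟩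
  refine Finset.sum_le_sum fun i _ => ?_
  have hi := hN.pos (Pi.single_ne_zero_iff.2 one_ne_zero : (Pi.single i 1 : Fin d → ℝ) ≠ 0)
  have hxi : |x i| ≤ 1 / N (Pi.single i 1) :=
    (le_div_iff₀ hi).2 ((abs_mul_apply_single_le hN hom x i).trans hx)
  calc x i * y i ≤ |x i| * |y i| := by rw [← abs_mul]; exact le_abs_self _
    _ ≤ 1 / N (Pi.single i 1) * |y i| := by gcongr
    _ = |y i| / N (Pi.single i 1) := by ring

lemma dot_le_dualNorm (hN : IsNorm N) (hom : OrthantMonotonic N) {x : Fin d → ℝ} (hx : N x ≤ 1)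
    (y : Fin d → ℝ) : dot x y ≤ dualNorm N y :=
  le_csSup (bddAbove_dualNorm_set hN hom y) ⟨x, hx, rfl⟩

lemma dualNorm_le_iff (hN : IsNorm N) (hom : OrthantMonotonic N) {y : Fin d → ℝ} {c : ℝ}
    (hc : 0 ≤ c) : dualNorm N y ≤ c ↔ ∀ x, N x ≤ 1 → dot x y ≤ c :=
  ⟨fun h x hx => (dot_le_dualNorm hN hom hx y).trans h,
    fun h => Real.sSup_le (by rintro r ⟨x, hx, rfl⟩; exact h x hx) hc⟩

lemma dualNorm_zero (hN : IsNorm N) (hom : OrthantMonotonic N) : dualNorm N 0 = 0 :=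
  le_antisymm ((dualNorm_le_iff hN hom le_rfl).2 fun x _ => by simp [dot])
    (by simpa [dot] using dot_le_dualNorm hN hom (x := 0) (by simp [hN.map_zero]) 0)

lemma dot_le_mul_dualNorm (hN : IsNorm N) (hom : OrthantMonotonic N) (x y : Fin d → ℝ) :
    dot x y ≤ N x * dualNorm N y := by
  rcases eq_or_ne x 0 with rfl | hx
  · simp [dot, hN.map_zero]
  have hpos := hN.pos hx
  have hunit : N ((N x)⁻¹ • x) ≤ 1 := by
    rw [hN.2.2.1, abs_of_pos (inv_pos.2 hpos), inv_mul_cancel₀ hpos.ne']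
  have h := dot_le_dualNorm hN hom hunit y
  rw [dot_eq_dotProduct, smul_dotProduct, smul_eq_mul, inv_mul_le_iff₀ hpos] at h
  exact h

lemma abs_apply_le_mul_dualNorm (hN : IsNorm N) (hom : OrthantMonotonic N) (y : Fin d → ℝ)
    (i : Fin d) : |y i| ≤ N (Pi.single i 1) * dualNorm N y := by
  have h₁ := dot_le_mul_dualNorm hN hom (Pi.single i 1) y
  have h₂ := dot_le_mul_dualNorm hN hom (-Pi.single i 1) y
  simp only [dot_eq_dotProduct, single_dotProduct, neg_dotProduct, one_mul, hN.map_neg] at h₁ h₂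
  exact abs_le.2 ⟨by linarith, h₁⟩

lemma dualBall_eq_biInter (hN : IsNorm N) (hom : OrthantMonotonic N) :
    {y | dualNorm N y ≤ 1} = ⋂ x ∈ {x | N x ≤ 1}, {y : Fin d → ℝ | dot x y ≤ 1} := by
  ext y
  simp only [mem_ofPred_eq, mem_iInter]
  exact dualNorm_le_iff hN hom zero_le_one

lemma convex_dualBall (hN : IsNorm N) (hom : OrthantMonotonic N) :
    Convex ℝ {y : Fin d → ℝ | dualNorm N y ≤ 1} := by
  rw [dualBall_eq_biInter hN hom]
  exact convex_iInter₂ fun x _ => convex_halfSpace_le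
    ⟨dotProduct_add x, fun c y => dotProduct_smul c x y⟩ 1

lemma isCompact_dualBall (hN : IsNorm N) (hom : OrthantMonotonic N) :
    IsCompact {y : Fin d → ℝ | dualNorm N y ≤ 1} := by
  have hclosed : IsClosed {y : Fin d → ℝ | dualNorm N y ≤ 1} := by
    rw [dualBall_eq_biInter hN hom]
    exact isClosed_biInter fun x _ =>
      isClosed_le (continuous_const.dotProduct continuous_id) continuous_const
  refine (isCompact_univ_pi fun i => isCompact_Icc
    (a := -N (Pi.single i 1)) (b := N (Pi.single i 1))).of_isClosed_subset hclosed ?_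
  intro y hy i _
  have := (abs_apply_le_mul_dualNorm hN hom y i).trans
    (mul_le_of_le_one_right (hN.1 _) hy)
  exact abs_le.1 this

lemma apply_proj_le_one_of_forall_dot_le_one (hN : IsNorm N) (hom : OrthantMonotonic N)
    {K : Finset (Fin d)} {x : Fin d → ℝ}
    (h : ∀ z ∈ coordSubspace K, dualNorm N z ≤ 1 → dot x z ≤ 1) : N (proj K x) ≤ 1 := by
  by_contra hgt
  obtain ⟨w, hw, hxw⟩ := exists_dot_le_one_lt_dot hN.convex_ball hN.isClosed_ball
    (by simp [hN.map_zero]) (show proj K x ∉ {v | N v ≤ 1} from hgt)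
  have hdual : dualNorm N (proj K w) ≤ 1 :=
    (dualNorm_le_iff hN hom zero_le_one).2 fun v hv => by
      rw [dot_proj_right]
      exact hw _ ((hom.apply_proj_le K v).trans hv)
  have := h _ (proj_mem_coordSubspace K w) hdual
  rw [dot_proj_right] at this
  linarith

end Dual

section TopNorm

variable {N : (Fin d → ℝ) → ℝ} {k : ℕ}

lemma bddAbove_topNorm_set (N : (Fin d → ℝ) → ℝ) (k : ℕ) (x : Fin d → ℝ) :
    BddAbove {r | ∃ K : Finset (Fin d), K.card ≤ k ∧ r = N (proj K x)} :=
  ((Set.finite_range fun K : Finset (Fin d) => N (proj K x)).subset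
    (by rintro r ⟨K, -, rfl⟩; exact ⟨K, rfl⟩)).bddAbove

lemma le_topNorm {K : Finset (Fin d)} (hK : K.card ≤ k) (x : Fin d → ℝ) :
    N (proj K x) ≤ topNorm N k x :=
  le_csSup (bddAbove_topNorm_set N k x) ⟨K, hK, rfl⟩

lemma topNorm_le {x : Fin d → ℝ} {c : ℝ} (hc : 0 ≤ c)
    (h : ∀ K : Finset (Fin d), K.card ≤ k → N (proj K x) ≤ c) : topNorm N k x ≤ c :=
  Real.sSup_le (by rintro r ⟨K, hK, rfl⟩; exact h K hK) hc

lemma topNorm_nonneg (hN : IsNorm N) (x : Fin d → ℝ) : 0 ≤ topNorm N k x :=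
  (hN.1 _).trans (le_topNorm (K := ∅) (Nat.zero_le k) x)

lemma topNorm_smul (hN : IsNorm N) (c : ℝ) (x : Fin d → ℝ) :
    topNorm N k (c • x) = |c| * topNorm N k x := by
  have hset : {r | ∃ K : Finset (Fin d), K.card ≤ k ∧ r = N (proj K (c • x))} =
      |c| • {r | ∃ K : Finset (Fin d), K.card ≤ k ∧ r = N (proj K x)} := by
    ext r
    simp only [Set.mem_smul_set, mem_ofPred_eq, smul_eq_mul, proj_smul, hN.2.2.1]
    constructor
    · rintro ⟨K, hK, rfl⟩
      exact ⟨_, ⟨K, hK, rfl⟩, rfl⟩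
    · rintro ⟨_, ⟨K, hK, rfl⟩, rfl⟩
      exact ⟨K, hK, rfl⟩
  rw [topNorm, hset, Real.sSup_smul_of_nonneg (abs_nonneg c), smul_eq_mul, topNorm]

lemma isNorm_topNorm (hN : IsNorm N) (hk : 1 ≤ k) : IsNorm (topNorm N k) := by
  refine ⟨topNorm_nonneg hN, fun x => ⟨fun h => ?_, ?_⟩, topNorm_smul hN, fun x y => ?_⟩
  · ext i
    have hi : N (proj {i} x) ≤ 0 := h ▸ le_topNorm (by simpa using hk) x
    have := congrFun ((hN.2.1 _).1 (le_antisymm hi (hN.1 _))) i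
    simpa [proj] using this
  · rintro rfl
    simpa [hN.map_zero] using topNorm_smul hN (k := k) 0 0
  · refine topNorm_le (add_nonneg (topNorm_nonneg hN x) (topNorm_nonneg hN y)) fun K hK => ?_
    calc N (proj K (x + y)) ≤ N (proj K x) + N (proj K y) := proj_add K x y ▸ hN.2.2.2 _ _
      _ ≤ topNorm N k x + topNorm N k y := add_le_add (le_topNorm hK x) (le_topNorm hK y)

lemma orthantMonotonic_topNorm (hN : IsNorm N) (hom : OrthantMonotonic N) :
    OrthantMonotonic (topNorm N k) := fun x x' habs hsgn =>
  topNorm_le (topNorm_nonneg hN x') fun K hK =>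
    (hom _ _ (fun i => by by_cases h : i ∈ K <;> simp [proj, h, habs i])
      (fun i => by by_cases h : i ∈ K <;> simp [proj, h, hsgn i])).trans (le_topNorm hK x')

end TopNorm

lemma l0_eq_zero_iff {x : Fin d → ℝ} : l0 x = 0 ↔ x = 0 := by
  rw [l0, Set.ncard_eq_zero]
  simp [Set.eq_empty_iff_forall_notMem, funext_iff]

lemma l0_le_iff_exists_mem_coordSubspace {x : Fin d → ℝ} {k : ℕ} :
    l0 x ≤ k ↔ ∃ K : Finset (Fin d), K.card ≤ k ∧ x ∈ coordSubspace K := by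
  constructor
  · intro h
    refine ⟨univ.filter fun i => x i ≠ 0, ?_, fun j hj => by simpa using hj⟩
    rwa [l0, Set.ncard_eq_toFinset_card', Set.toFinset_ofPred] at h
  · rintro ⟨K, hK, hx⟩
    refine le_trans ?_ hK
    rw [l0, ← Set.ncard_coe_finset]
    exact Set.ncard_le_ncard (fun i hi => by_contra fun hiK => hi (hx i hiK))

section ConvexHull

variable {E : Type*} [AddCommGroup E] [Module ℝ E] [TopologicalSpace E] [ContinuousAdd E]
  [ContinuousSMul ℝ E]

lemma isCompact_convexJoin {s t : Set E} (hs : IsCompact s) (ht : IsCompact t) :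
    IsCompact (convexJoin ℝ s t) := by
  have : convexJoin ℝ s t =
      (fun p : E × E × ℝ => (1 - p.2.2) • p.1 + p.2.2 • p.2.1) '' (s ×ˢ t ×ˢ Set.Icc 0 1) := by
    ext z
    simp only [mem_convexJoin, segment_eq_image, mem_image, Prod.exists, mem_prod]
    aesop
  rw [this]
  exact (hs.prod (ht.prod isCompact_Icc)).image (by fun_prop)

lemma isCompact_convexHull_biUnion {ι : Type*} (I : Finset ι) {S : ι → Set E}
    (hcomp : ∀ i, IsCompact (S i)) (hconv : ∀ i, Convex ℝ (S i)) (hne : ∀ i, (S i).Nonempty) :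
    IsCompact (convexHull ℝ (⋃ i ∈ I, S i)) := by
  classical
  induction I using Finset.induction_on with
  | empty => simp
  | insert a I _ ih =>
    rw [Finset.set_biUnion_insert]
    rcases I.eq_empty_or_nonempty with rfl | ⟨i, hi⟩
    · simpa [(hconv a).convexHull_eq] using hcomp a
    · rw [convexHull_union (hne a) ((hne i).mono (Finset.subset_set_biUnion_of_mem hi)),
        (hconv a).convexHull_eq]
      exact isCompact_convexJoin (hcomp a) ih

end ConvexHull

section SupportNorm

variable {N : (Fin d → ℝ) → ℝ} {k : ℕ}

lemma supportNorm_le_one_of_l0_le (hN : IsNorm N) (hom : OrthantMonotonic N) {y : Fin d → ℝ}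
    (hl0 : l0 y ≤ k) (hy : dualNorm N y ≤ 1) : supportNorm N k y ≤ 1 := by
  obtain ⟨K, hK, hyK⟩ := l0_le_iff_exists_mem_coordSubspace.1 hl0
  refine Real.sSup_le ?_ zero_le_one
  rintro r ⟨x, hx, rfl⟩
  calc dot x y = dot (proj K x) y := by rw [← dot_proj_right, proj_eq_self hyK]
    _ ≤ N (proj K x) * dualNorm N y := dot_le_mul_dualNorm hN hom _ y
    _ ≤ N (proj K x) := mul_le_of_le_one_right (hN.1 _) hy
    _ ≤ topNorm N k x := le_topNorm hK x
    _ ≤ 1 := hx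

lemma isCompact_convexHull_dualBall_inter_l0_le (hN : IsNorm N) (hom : OrthantMonotonic N) :
    IsCompact (convexHull ℝ ({z | dualNorm N z ≤ 1} ∩ {z : Fin d → ℝ | l0 z ≤ k})) := by
  have hunion : {z | dualNorm N z ≤ 1} ∩ {z : Fin d → ℝ | l0 z ≤ k} =
      ⋃ K ∈ univ.filter (fun K : Finset (Fin d) => K.card ≤ k),
        {z | dualNorm N z ≤ 1} ∩ coordSubspace K := by
    ext z
    simp [l0_le_iff_exists_mem_coordSubspace]
  rw [hunion]
  exact isCompact_convexHull_biUnion _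
    (fun K => (isCompact_dualBall hN hom).inter_right (isClosed_coordSubspace K))
    (fun K => (convex_dualBall hN hom).inter (convex_coordSubspace K))
    (fun K => ⟨0, by simp [dualNorm_zero hN hom], fun _ _ => rfl⟩)

lemma mem_convexHull_of_supportNorm_le_one (hN : IsNorm N) (hom : OrthantMonotonic N)
    (hk : 1 ≤ k) {y : Fin d → ℝ} (hy : supportNorm N k y ≤ 1) :
    y ∈ convexHull ℝ ({z | dualNorm N z ≤ 1} ∩ {z | l0 z ≤ k}) := by
  by_contra hy'
  obtain ⟨w, hw, hyw⟩ := exists_dot_le_one_lt_dot (convex_convexHull ℝ _)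
    (isCompact_convexHull_dualBall_inter_l0_le hN hom).isClosed
    (subset_convexHull ℝ _ ⟨by simp [dualNorm_zero hN hom], by simp [l0]⟩) hy'
  have hw_top : topNorm N k w ≤ 1 := topNorm_le zero_le_one fun K hK =>
    apply_proj_le_one_of_forall_dot_le_one hN hom fun z hzK hz => by
      rw [dot_comm]
      exact hw z (subset_convexHull ℝ _
        ⟨hz, l0_le_iff_exists_mem_coordSubspace.2 ⟨K, hK, hzK⟩⟩)
  have := dot_le_dualNorm (isNorm_topNorm hN hk) (orthantMonotonic_topNorm hN hom) hw_top y
  rw [dot_comm] at hyw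
  exact (hyw.trans_le (this.trans hy)).false

end SupportNorm

lemma ExtremePt.mem_extremePoints {C : Set (Fin d → ℝ)} {x : Fin d → ℝ} (h : ExtremePt C x) :
    x ∈ C.extremePoints ℝ :=
  ⟨h.1, fun _ h₁ _ h₂ ⟨a, b, ha, hb, hab, hx⟩ =>
    (h.2 _ h₁ _ h₂ a ha (by linarith) (by rw [← hx, ← hab, add_sub_cancel_left])).1⟩

theorem levelSet_l0_inter_dualSphere_eq_supportBall_inter_dualSphere_general
    (N : (Fin d → ℝ) → ℝ) (hN : IsNorm N)
    (hom : OrthantMonotonic N)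
    (hsc : ∀ y : Fin d → ℝ, dualNorm N y = 1 →
      ExtremePt {z | dualNorm N z ≤ 1} y)
    (k : ℕ) :
    {x : Fin d → ℝ | l0 x ≤ k} ∩ {y | dualNorm N y = 1} =
      (if k = 0 then ({0} : Set (Fin d → ℝ))
        else {y : Fin d → ℝ | supportNorm N k y ≤ 1})
      ∩ {y | dualNorm N y = 1} := by
  ext y
  split_ifs with hk
  · simp [hk, l0_eq_zero_iff]
  refine and_congr_left fun hy => ⟨fun hl0 => supportNorm_le_one_of_l0_le hN hom hl0 hy.le,
    fun hsupp => ?_⟩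
  have hext : y ∈ (convexHull ℝ ({z | dualNorm N z ≤ 1} ∩ {z | l0 z ≤ k})).extremePoints ℝ :=
    inter_extremePoints_subset_extremePoints_of_subset
      (convexHull_min inter_subset_left (convex_dualBall hN hom))
      ⟨mem_convexHull_of_supportNorm_le_one hN hom (Nat.one_le_iff_ne_zero.2 hk) hsupp,
        (hsc y hy).mem_extremePoints⟩
  exact (extremePoints_convexHull_subset hext).2

/-- for an orthant-monotonic source norm whose dual normed space
is strictly convex, the intersection of the level set `{ℓ0 ≤ k}` with the dual
unit sphere equals the intersection of the unit ball of the generalized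
k-support norm with the dual unit sphere (for `k = 0` the latter unit ball is
understood as `{0}`). -/
theorem levelSet_l0_inter_dualSphere_eq_supportBall_inter_dualSphere
    (hd : 0 < d) (N : (Fin d → ℝ) → ℝ) (hN : IsNorm N)
    (hom : OrthantMonotonic N)
    (hsc : ∀ y : Fin d → ℝ, dualNorm N y = 1 →
      ExtremePt {z | dualNorm N z ≤ 1} y)
    (k : ℕ) (hk : k ≤ d) :
    {x : Fin d → ℝ | l0 x ≤ k} ∩ {y | dualNorm N y = 1} =
      (if k = 0 then ({0} : Set (Fin d → ℝ))
        else {y : Fin d → ℝ | supportNorm N k y ≤ 1})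
      ∩ {y | dualNorm N y = 1} :=
  levelSet_l0_inter_dualSphere_eq_supportBall_inter_dualSphere_general N hN hom hsc k

end OSMPaper
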